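/- arXiv:1801.02014 — 4 statements merged into one kernel-verified Lean document; each statement's English description precedes it below -/
import Mathlib

section
/- Let F be a field, N a natural number, and G an N×N matrix over F such that every square submatrix of G is invertible. Let x and x' be vectors in F^N, and let I and J be subsets of the index set {1,...,N} with |J| ≤ |I|. If x and x' agree on every coordinate outside J, and the vectors Gx and Gx' agree on every coordinate in I, then x = x'. -/
/-!
Put `d = x - x'`. It is supported on `J` and `G d` vanishes on `I`. Choosing `|J|` rows
inside `I` and the columns `J`, the square submatrix of `G` they cut out sends the
restriction of `d` to `J` to zero; being invertible, it forces `d = 0`.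
-/

def AllSquareSubmatricesInvertible {F : Type*} [Field F] {ι : Type*} [DecidableEq ι]
    (G : Matrix ι ι F) : Prop :=
  ∀ (r : ℕ) (f g : Fin r → ι), Function.Injective f → Function.Injective g →
    (G.submatrix f g).det ≠ 0

namespace Matrix

variable {m n κ ι R : Type*} [Fintype n] [Fintype κ] [CommRing R]

theorem submatrix_mulVec_comp_of_eq_zero_off_range (G : Matrix m n R) (f : ι → m)
    {g : κ → n} (hg : Function.Injective g) {v : n → R} (hv : ∀ j ∉ Set.range g, v j = 0) :
    G.submatrix f g *ᵥ (v ∘ g) = (G *ᵥ v) ∘ f := by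
  ext k
  exact Fintype.sum_of_injective g hg _ (fun j => G (f k) j * v j)
    (fun j hj => by rw [hv j hj, mul_zero]) (fun _ => rfl)

theorem eq_zero_of_mulVec_eq_zero_on_rows [DecidableEq κ] [NoZeroDivisors R]
    (G : Matrix m n R) {f : κ → m} {g : κ → n} (hg : Function.Injective g)
    (hdet : (G.submatrix f g).det ≠ 0) {v : n → R} (hv : ∀ j ∉ Set.range g, v j = 0)
    (hGv : ∀ k, (G *ᵥ v) (f k) = 0) : v = 0 := by
  have hvg : v ∘ g = 0 := eq_zero_of_mulVec_eq_zero hdet <| by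
    rw [submatrix_mulVec_comp_of_eq_zero_off_range G f hg hv]
    exact funext hGv
  funext j
  by_cases hj : j ∈ Set.range g
  · obtain ⟨k, rfl⟩ := hj
    exact congrFun hvg k
  · exact hv j hj

end Matrix

/-- If every square submatrix of the `N × N` matrix `G` is invertible, `x` and `x'`
agree outside `J`, `G x` and `G x'` agree on `I`, and `|J| ≤ |I|`, then `x = x'`. -/
theorem eq_of_agree_outside_and_mulVec_agree
    {F : Type*} [Field F] {N : ℕ} (G : Matrix (Fin N) (Fin N) F)
    (hG : AllSquareSubmatricesInvertible G)
    (x x' : Fin N → F) (I J : Finset (Fin N))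
    (hcard : J.card ≤ I.card)
    (hout : ∀ i, i ∉ J → x i = x' i)
    (hin : ∀ i ∈ I, G.mulVec x i = G.mulVec x' i) :
    x = x' := by
  let g := J.orderEmbOfFin rfl
  let f := I.orderEmbOfFin rfl ∘ Fin.castLE hcard
  have hf : Function.Injective f :=
    (I.orderEmbOfFin rfl).injective.comp (Fin.castLE_injective hcard)
  rw [← sub_eq_zero]
  refine G.eq_zero_of_mulVec_eq_zero_on_rows g.injective (hG _ f g hf g.injective) ?_ ?_
  · intro j hj
    rw [Finset.range_orderEmbOfFin] at hj
    exact sub_eq_zero.mpr (hout j hj)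
  · intro k
    rw [Matrix.mulVec_sub, Pi.sub_apply, sub_eq_zero]
    exact hin _ (I.orderEmbOfFin_mem rfl _)
end

section
/- Let F be a field, k ≥ 1 a natural number, and G a k²×k² matrix over F, with rows and columns indexed by pairs (i,s) ∈ {1,...,k}×{1,...,k}, such that every square submatrix of G is invertible. Let m, m' : {1,...,k}×{1,...,k} → F be message vectors and set p = Gm, p' = Gm'. Fix i ∈ {1,...,k}. If m(j,s) = m'(j,s) for all j ≠ i and all s ∈ {1,...,k}, and p(j,k) = p'(j,k) for all j ∈ {1,...,k}, then m = m'. (In other words, in the clustered code where node N(1,j) of the first cluster stores the message block m_j = (m(j,1),...,m(j,k)) and node N(2,j) of the second cluster stores the parity block p_j = (p(j,1),...,p(j,k)), a failed systematic node N(1,i) is exactly regenerated from the full contents of the other k−1 systematic nodes together with one symbol p(j,k) from each of the k parity nodes.) -/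
/-!
Put `d = m - m'`. It vanishes outside the block `i`, so the `k` equations `(G d)(j, k) = 0`
involve only the `k` unknowns `d(i, s)`, with coefficient matrix the `k × k` submatrix of `G`
on rows `(j, k)` and columns `(i, s)`. That submatrix is invertible, hence `d = 0`.
-/

open Matrix

theorem Matrix.submatrix_mk_mulVec_of_forall_ne_eq_zero {R ι κ α β : Type*}
    [NonUnitalNonAssocSemiring R] [Fintype α] [Fintype β] [DecidableEq α]
    (G : Matrix ι (α × β) R) (rows : κ → ι) (x : α × β → R) (i : α)
    (hx : ∀ a, a ≠ i → ∀ b, x (a, b) = 0) :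
    G.submatrix rows (Prod.mk i) *ᵥ (fun b => x (i, b)) = fun j => (G *ᵥ x) (rows j) := by
  funext j
  simp only [mulVec, dotProduct, submatrix_apply, Fintype.sum_prod_type]
  rw [Finset.sum_eq_single i]
  · intro a _ ha
    exact Finset.sum_eq_zero fun b _ => by rw [hx a ha b, mul_zero]
  · exact fun hi => absurd (Finset.mem_univ i) hi

/-- Exact regeneration of a failed systematic node `N(1,i)`: in Construction 1
for the `[2k,k,2]` clustered DSS with `ε = 1/(n-k)`, the message vector is
determined by the contents of the other `k-1` systematic nodes together with
the last symbol `p(j,k)` of each of the `k` parity nodes. -/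
theorem systematic_node_exact_regeneration
    {F : Type*} [Field F] {k : ℕ} (hk : 1 ≤ k)
    (G : Matrix (Fin k × Fin k) (Fin k × Fin k) F)
    (hG : AllSquareSubmatricesInvertible G)
    (m m' : Fin k × Fin k → F)
    (p p' : Fin k × Fin k → F)
    (hp : p = G.mulVec m) (hp' : p' = G.mulVec m')
    (i : Fin k)
    (hm : ∀ j : Fin k, j ≠ i → ∀ s : Fin k, m (j, s) = m' (j, s))
    (hpar : ∀ j : Fin k, p (j, ⟨k - 1, by omega⟩) = p' (j, ⟨k - 1, by omega⟩)) :
    m = m' := by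
  set e : Fin k := ⟨k - 1, by omega⟩
  have hd : ∀ a, a ≠ i → ∀ b, (m - m') (a, b) = 0 := fun a ha b => sub_eq_zero.mpr (hm a ha b)
  have hdet : (G.submatrix (fun j => (j, e)) (Prod.mk i)).det ≠ 0 :=
    hG k _ _ (Prod.mk_left_injective e) (Prod.mk_right_injective i)
  have hblock : G.submatrix (fun j => (j, e)) (Prod.mk i) *ᵥ (fun s => (m - m') (i, s)) = 0 := by
    rw [submatrix_mk_mulVec_of_forall_ne_eq_zero G _ _ i hd, mulVec_sub, ← hp, ← hp']
    funext j
    exact sub_eq_zero.mpr (hpar j)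
  have hdi := eq_zero_of_mulVec_eq_zero hdet hblock
  funext ⟨a, b⟩
  by_cases ha : a = i
  · subst ha
    exact sub_eq_zero.mp (congrFun hdi b)
  · exact hm a ha b
end

section
/- Let F be a field, k ≥ 1 a natural number, and G a k²×k² matrix over F, with rows and columns indexed by pairs (i,s) ∈ {1,...,k}×{1,...,k}, such that every square submatrix of G is invertible. Let m, m' : {1,...,k}×{1,...,k} → F be message vectors and set p = Gm, p' = Gm'. Let S, T be subsets of {1,...,k} with |S| + |T| = k. If m(j,s) = m'(j,s) for all j ∈ S and all s ∈ {1,...,k}, and p(j,s) = p'(j,s) for all j ∈ T and all s ∈ {1,...,k}, then m = m'. (In other words, in the clustered code where each of the 2k nodes stores either a message block m_j or a parity block p_j of k symbols, a data collector contacting any k of the 2k nodes recovers the full file of M = k² message symbols; i.e., the code has the MDS property.) -/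
/-!
Put `d = m - m'`. It vanishes on the `|S| k` coordinates of the blocks in `S`, and `G d`
vanishes on the `|T| k` coordinates of the blocks in `T`. Since `|T| k = (k - |S|) k`, the
rows of `G` indexed by the `T`-blocks and the columns indexed by the blocks outside `S`
form a square submatrix, which is invertible and kills the restriction of `d`; hence `d = 0`.
-/

open Finset Matrix

lemma Matrix.mulVec_apply_eq_sum_of_support_subset {F ι : Type*} [Field F] [Fintype ι]
    (G : Matrix ι ι F) {C : Finset ι} {v : ι → F} (hv : ∀ c ∉ C, v c = 0) (i : ι) :
    (G *ᵥ v) i = ∑ c ∈ C, G i c * v c :=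
  (sum_subset (subset_univ C) fun c _ hc => by rw [hv c hc, mul_zero]).symm

lemma AllSquareSubmatricesInvertible.eq_zero_of_mulVec_eq_zero_on {F ι : Type*} [Field F]
    [Fintype ι] [DecidableEq ι] {G : Matrix ι ι F} (hG : AllSquareSubmatricesInvertible G)
    {R C : Finset ι} (hcard : #C ≤ #R) {v : ι → F} (hv : ∀ c ∉ C, v c = 0)
    (hGv : ∀ r ∈ R, (G *ᵥ v) r = 0) : v = 0 := by
  obtain ⟨R', hR'R, hR'⟩ := exists_subset_card_eq hcard
  set rows : Fin #C → ι := fun a => (R'.equivFinOfCardEq hR').symm a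
  set cols : Fin #C → ι := fun a => C.equivFin.symm a
  have hdet : (G.submatrix rows cols).det ≠ 0 :=
    hG _ rows cols (Subtype.val_injective.comp (Equiv.injective _))
      (Subtype.val_injective.comp (Equiv.injective _))
  have hsub : G.submatrix rows cols *ᵥ (v ∘ cols) = 0 := by
    funext a
    calc (G.submatrix rows cols *ᵥ (v ∘ cols)) a
        = ∑ c : C, G (rows a) c * v c := C.equivFin.symm.sum_comp fun c => G (rows a) c * v c
      _ = (G *ᵥ v) (rows a) :=
          (sum_coe_sort C fun c => G (rows a) c * v c).trans
            (G.mulVec_apply_eq_sum_of_support_subset hv _).symm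
      _ = 0 := hGv _ (hR'R (Subtype.property _))
  have hcols : v ∘ cols = 0 := eq_zero_of_mulVec_eq_zero hdet hsub
  funext c
  by_cases hc : c ∈ C
  · simpa [cols] using congrFun hcols (C.equivFin ⟨c, hc⟩)
  · exact hv c hc

theorem data_reconstruction_MDS_general
    {F : Type*} [Field F] {k : ℕ}
    (G : Matrix (Fin k × Fin k) (Fin k × Fin k) F)
    (hG : AllSquareSubmatricesInvertible G)
    (m m' : Fin k × Fin k → F)
    (p p' : Fin k × Fin k → F)
    (hp : p = G.mulVec m) (hp' : p' = G.mulVec m')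
    (S T : Finset (Fin k))
    (hST : S.card + T.card = k)
    (hmsg : ∀ j ∈ S, ∀ s : Fin k, m (j, s) = m' (j, s))
    (hpar : ∀ j ∈ T, ∀ s : Fin k, p (j, s) = p' (j, s)) :
    m = m' := by
  have hblocks : ∀ U : Finset (Fin k), #(U ×ˢ (univ : Finset (Fin k))) = #U * k := by
    simp
  refine sub_eq_zero.mp <| hG.eq_zero_of_mulVec_eq_zero_on
    (R := T ×ˢ univ) (C := Sᶜ ×ˢ univ) ?_ ?_ ?_
  · rw [hblocks, hblocks, card_compl, Fintype.card_fin]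
    exact Nat.mul_le_mul_right k (by omega)
  · rintro ⟨j, s⟩ hc
    have hj : j ∈ S := by simpa using hc
    simp [hmsg j hj s]
  · rintro ⟨j, s⟩ hr
    have hj : j ∈ T := by simpa using hr
    simpa [Matrix.mulVec_sub, hp, hp', sub_eq_zero] using hpar j hj s

/-- Data reconstruction (MDS property) of Construction 1 for the `[2k,k,2]`
clustered DSS: a data collector contacting the message blocks indexed by `S`
and the parity blocks indexed by `T`, with `|S| + |T| = k`, recovers the full
file of `k²` message symbols. -/
theorem data_reconstruction_MDS
    {F : Type*} [Field F] {k : ℕ} (hk : 1 ≤ k)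
    (G : Matrix (Fin k × Fin k) (Fin k × Fin k) F)
    (hG : AllSquareSubmatricesInvertible G)
    (m m' : Fin k × Fin k → F)
    (p p' : Fin k × Fin k → F)
    (hp : p = G.mulVec m) (hp' : p' = G.mulVec m')
    (S T : Finset (Fin k))
    (hST : S.card + T.card = k)
    (hmsg : ∀ j ∈ S, ∀ s : Fin k, m (j, s) = m' (j, s))
    (hpar : ∀ j ∈ T, ∀ s : Fin k, p (j, s) = p' (j, s)) :
    m = m' :=
  data_reconstruction_MDS_general G hG m m' p p' hp hp' S T hST hmsg hpar
end

section
/- Let F be a field, N a natural number, and let x, y : {1,...,N} → F be such that x is injective, y is injective, and x(i) ≠ y(j) for all i, j. Let G be the N×N Cauchy matrix with entries G(i,j) = 1/(x(i) − y(j)). Then every square submatrix of G is invertible: for every pair of subsets I, J of {1,...,N} with |I| = |J|, the square submatrix of G formed by the rows indexed by I and the columns indexed by J has nonzero determinant. -/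
open Polynomial in
lemma cauchy_det_ne_zero {F : Type*} [Field F] {r : ℕ} (a b : Fin r → F)
    (ha : Function.Injective a) (hb : Function.Injective b)
    (hab : ∀ i j, a i ≠ b j) :
    (Matrix.of fun i j => (a i - b j)⁻¹).det ≠ 0 := by
  intro hdet
  obtain ⟨v, hv0, hv⟩ := Matrix.exists_vecMul_eq_zero_iff.mpr hdet
  rcases Nat.eq_zero_or_pos r with hr | hr
  · subst hr
    exact hv0 (funext fun i => i.elim0)
  set P : F[X] := ∑ i, C (v i) * ∏ k ∈ Finset.univ.erase i, (C (a k) - X) with hP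
  have hterm : ∀ i : Fin r,
      (C (v i) * ∏ k ∈ Finset.univ.erase i, (C (a k) - X)).natDegree ≤ r - 1 := by
    intro i
    calc (C (v i) * ∏ k ∈ Finset.univ.erase i, (C (a k) - X)).natDegree
        ≤ (C (v i)).natDegree + (∏ k ∈ Finset.univ.erase i, (C (a k) - X)).natDegree :=
          natDegree_mul_le
      _ ≤ 0 + ∑ k ∈ Finset.univ.erase i, (C (a k) - X).natDegree := by
          gcongr
          · exact le_of_eq (natDegree_C _)
          · exact natDegree_prod_le _ _
      _ ≤ 0 + ∑ k ∈ Finset.univ.erase i, 1 := by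
          gcongr with k
          calc (C (a k) - X).natDegree ≤ max (C (a k)).natDegree X.natDegree :=
                natDegree_sub_le _ _
            _ ≤ 1 := by simp [natDegree_C]
      _ = (Finset.univ.erase i).card := by simp
      _ = r - 1 := by simp
  have hPdeg : P.natDegree < r := by
    have : P.natDegree ≤ r - 1 := natDegree_sum_le_of_forall_le _ _ (fun i _ => hterm i)
    omega
  have heval : ∀ j : Fin r, P.eval (b j) = 0 := by
    intro j
    have hvj : ∑ i, v i * (a i - b j)⁻¹ = 0 := congrFun hv j
    have : P.eval (b j) = ∑ i, v i * ∏ k ∈ Finset.univ.erase i, (a k - b j) := by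
      simp [hP, eval_finset_sum, eval_prod]
    rw [this]
    have key : ∀ i : Fin r, v i * ∏ k ∈ Finset.univ.erase i, (a k - b j)
        = (v i * (a i - b j)⁻¹) * ∏ k, (a k - b j) := by
      intro i
      rw [← Finset.mul_prod_erase Finset.univ _ (Finset.mem_univ i)]
      field_simp [sub_ne_zero.mpr (hab i j)]
    rw [Finset.sum_congr rfl fun i _ => key i, ← Finset.sum_mul, hvj, zero_mul]
  have hP0 : P = 0 := by
    apply Polynomial.eq_zero_of_natDegree_lt_card_of_eval_eq_zero P hb heval
    simpa using hPdeg
  apply hv0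
  funext i
  have : P.eval (a i) = v i * ∏ k ∈ Finset.univ.erase i, (a k - a i) := by
    rw [hP, eval_finset_sum]
    rw [Finset.sum_eq_single i]
    · simp [eval_prod]
    · intro m _ hmi
      have : i ∈ Finset.univ.erase m := Finset.mem_erase.mpr ⟨fun h => hmi h.symm, Finset.mem_univ i⟩
      simp [eval_prod, Finset.prod_eq_zero this]
    · simp
  rw [hP0, eval_zero] at this
  have hne : (∏ k ∈ Finset.univ.erase i, (a k - a i)) ≠ 0 := by
    apply Finset.prod_ne_zero_iff.mpr
    intro k hk
    exact sub_ne_zero.mpr fun h => (Finset.mem_erase.mp hk).1 (ha h)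
  have := (mul_eq_zero.mp this.symm).resolve_right hne
  simpa using this

/-- Every square submatrix of a Cauchy matrix has nonzero determinant. -/
theorem cauchy_matrix_all_square_submatrices_invertible
    {F : Type*} [Field F] {N : ℕ} (x y : Fin N → F)
    (hx : Function.Injective x) (hy : Function.Injective y)
    (hxy : ∀ i j : Fin N, x i ≠ y j)
    (G : Matrix (Fin N) (Fin N) F)
    (hGdef : ∀ i j : Fin N, G i j = (x i - y j)⁻¹) :
    AllSquareSubmatricesInvertible G := by
  intro r f g hf hg
  have : G.submatrix f g = Matrix.of fun i j => (x (f i) - y (g j))⁻¹ := by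
    ext i j
    simp [Matrix.submatrix_apply, hGdef]
  rw [this]
  exact cauchy_det_ne_zero (x ∘ f) (y ∘ g) (hx.comp hf) (hy.comp hg)
    (fun i j => hxy (f i) (g j))
end
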